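/- arXiv:2304.00845 — 3 statements merged into one kernel-verified Lean document; each statement's English description precedes it below -/
import Mathlib

section
/- Let R be a ring and let rho : M → I be a monomorphism of R-modules. Then the class C_rho = { X in R-Mod | every morphism f : X → I factors through rho } is closed under direct limits (filtered colimits). -/
open CategoryTheory CategoryTheory.Limits

universe u

/-- Let `ρ : M → I` be a monomorphism of left `R`-modules. The class
`C_ρ = { X | every morphism X ⟶ I factors through ρ }` is closed under direct limits
(filtered colimits): if every object of a filtered diagram lies in `C_ρ`, then so does
its colimit. -/
theorem Crho_closed_under_direct_limits
    {R : Type u} [Ring R] {M I : ModuleCat.{u} R} (ρ : M ⟶ I) (hρ : Mono ρ)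
    (J : Type u) [SmallCategory J] [IsFiltered J] (D : J ⥤ ModuleCat.{u} R)
    (hD : ∀ j : J, ∀ f : D.obj j ⟶ I, ∃ g : D.obj j ⟶ M, g ≫ ρ = f) :
    ∀ f : colimit D ⟶ I, ∃ g : colimit D ⟶ M, g ≫ ρ = f := by
  intro f
  choose g hg using fun j => hD j (colimit.ι D j ≫ f)
  have hnat : ∀ {j j' : J} (φ : j ⟶ j'), D.map φ ≫ g j' = g j := by
    intro j j' φ
    rw [← cancel_mono ρ, Category.assoc, hg, hg, ← Category.assoc, colimit.w]
  let c : Cocone D := ⟨M, ⟨g, fun j j' φ => by simp [hnat φ]⟩⟩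
  refine ⟨colimit.desc D c, ?_⟩
  apply colimit.hom_ext
  intro j
  rw [← Category.assoc, colimit.ι_desc]
  exact hg j
end

section
/- Let R be a left noetherian ring, (T,F) a torsion pair in the category of all left R-modules such that F is closed under direct limits and T is generated by finitely presented modules (i.e. T is the closure of t = T ∩ mod-R under direct limits), and let (t,f) be its restriction to finitely presented modules. Then Alpha(T) ∩ mod-R = Alpha~(t), where Alpha(T) = { X | every f : T → X with T in T has ker(f) in T } computed in R-Mod, and Alpha~(t) is the analogous class computed inside the category of finitely presented modules. -/
open CategoryTheory CategoryTheory.Limits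

universe v u

variable {A : Type u} [Category.{v} A] [Abelian A]

/-- `(𝒯, ℱ)` is a torsion pair: no nonzero morphisms from `𝒯` to `ℱ`, and every object is
an extension of an object of `ℱ` by an object of `𝒯`. -/
def IsTorsionPair (𝒯 ℱ : Set A) : Prop :=
  (∀ ⦃X Y : A⦄, X ∈ 𝒯 → Y ∈ ℱ → ∀ f : X ⟶ Y, f = 0) ∧
  (∀ M : A, ∃ (X Y : A) (_ : X ∈ 𝒯) (_ : Y ∈ ℱ) (i : X ⟶ M) (p : M ⟶ Y)
      (w : i ≫ p = 0), (ShortComplex.mk i p w).ShortExact)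

/-- `Alpha 𝒯` consists of the objects `X` such that every morphism from an object of `𝒯`
to `X` has kernel in `𝒯`. -/
def Alpha (𝒯 : Set A) : Set A :=
  {X | ∀ ⦃T : A⦄, T ∈ 𝒯 → ∀ f : T ⟶ X, kernel f ∈ 𝒯}

/-- `alphaSet 𝒯 = 𝒯 ∩ Alpha 𝒯`. -/
def alphaSet (𝒯 : Set A) : Set A := 𝒯 ∩ Alpha 𝒯

variable (R : Type u) [Ring R]

/-- A witness that `X` is a direct limit (filtered colimit) of objects of `S`. -/
structure DirLimWitness (S : Set (ModuleCat.{u} R)) (X : ModuleCat.{u} R) where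
  J : Type u
  [instJ : SmallCategory J]
  [instF : IsFiltered J]
  D : J ⥤ ModuleCat.{u} R
  mem : ∀ j, D.obj j ∈ S
  c : Limits.Cocone D
  isColimit : Limits.IsColimit c
  pt_eq : c.pt = X

/-- The direct limit closure of a class of modules. -/
def limClosure (S : Set (ModuleCat.{u} R)) : Set (ModuleCat.{u} R) :=
  {X | Nonempty (DirLimWitness R S X)}

/-- The finitely presented modules. -/
def fpModules : Set (ModuleCat.{u} R) := {X | Module.FinitePresentation R X}

/-!
Over a noetherian ring submodules of finitely presented modules are finitely presented, so
kernels of maps out of `t = 𝒯 ∩ mod-R` stay in `mod-R`; this gives one inclusion. Conversely,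
every `T ∈ 𝒯` is a filtered colimit of modules `T_j ∈ t`, and filtered colimits of modules are
exact, so the kernel of `f : T ⟶ X` is the filtered colimit of the kernels of the composites
`T_j ⟶ T ⟶ X`, which lie in `t` when `X ∈ Alpha~(t)`.
-/

section

variable {R}

lemma fpModules_of_iso {M N : ModuleCat.{u} R} (e : M ≅ N) (hM : M ∈ fpModules R) :
    N ∈ fpModules R :=
  have : Module.FinitePresentation R M := hM
  Module.FinitePresentation.of_equiv e.toLinearEquiv

lemma kernel_mem_fpModules [IsNoetherianRing R] {T X : ModuleCat.{u} R} (hT : T ∈ fpModules R)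
    (f : T ⟶ X) : kernel f ∈ fpModules R := by
  have : Module.FinitePresentation R T := hT
  have : IsNoetherian R T := isNoetherian_of_isNoetherianRing_of_finite R T
  have : Module.Finite R (LinearMap.ker f.hom) :=
    Module.Finite.iff_fg.mpr (IsNoetherian.noetherian _)
  exact fpModules_of_iso (ModuleCat.kernelIsoKer f).symm (Module.finitePresentation_of_finite R _)

lemma limClosure_of_iso {S : Set (ModuleCat.{u} R)} {M N : ModuleCat.{u} R} (e : M ≅ N)
    (hM : M ∈ limClosure R S) : N ∈ limClosure R S := by
  obtain ⟨⟨J, D, mem, c, hc, rfl⟩⟩ := hM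
  exact ⟨⟨J, D, mem, ⟨N, c.ι ≫ (Functor.const J).map e.hom⟩,
    IsColimit.ofIsoColimit hc (Cocone.ext e fun _ => rfl), rfl⟩⟩

namespace ModuleCat

variable {J : Type u} [SmallCategory J] {D : J ⥤ ModuleCat.{u} R} (c : Cocone D)
  {X : ModuleCat.{u} R} (f : c.pt ⟶ X)

lemma map_mem_ker_ι_comp {i j : J} (φ : i ⟶ j) {x : D.obj i}
    (hx : x ∈ LinearMap.ker (c.ι.app i ≫ f).hom) :
    D.map φ x ∈ LinearMap.ker (c.ι.app j ≫ f).hom := by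
  rwa [LinearMap.mem_ker, ← ConcreteCategory.comp_apply, ← Category.assoc, c.w φ]

def kerDiagram : J ⥤ ModuleCat.{u} R where
  obj j := of R (LinearMap.ker (c.ι.app j ≫ f).hom)
  map φ := ofHom ((D.map φ).hom.restrict fun _ => map_mem_ker_ι_comp c f φ)
  map_id j := by ext x; exact congr($(D.map_id j) x.1)
  map_comp φ ψ := by ext x; exact congr($(D.map_comp φ ψ) x.1)

def kerCocone : Cocone (kerDiagram c f) where
  pt := of R (LinearMap.ker f.hom)
  ι.app j := ofHom ((c.ι.app j).hom.restrict fun _ hx => hx)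
  ι.naturality i j φ := by ext x; exact Subtype.ext congr($(c.w φ) x.1)

-- Colimits in `ModuleCat` are detected on underlying types, where filtered ones are elementwise.
noncomputable def isColimitKerCocone [IsFiltered J] (hc : IsColimit c) :
    IsColimit (kerCocone c f) := by
  have hc' := isColimitOfPreserves (forget (ModuleCat.{u} R)) hc
  refine isColimitOfReflects (forget (ModuleCat.{u} R))
    (Types.FilteredColimit.isColimitOf _ _ ?_ ?_)
  · intro x
    obtain ⟨j, y, hy⟩ := Types.jointly_surjective _ hc' x.1
    exact ⟨j, ⟨y, show f (c.ι.app j y) = 0 from hy ▸ x.2⟩, Subtype.ext hy.symm⟩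
  · intro i j xi xj h
    obtain ⟨k, φ, ψ, hk⟩ := (Types.FilteredColimit.isColimit_eq_iff _ hc').mp congr(Subtype.val $h)
    exact ⟨k, φ, ψ, Subtype.ext hk⟩

end ModuleCat

lemma kernel_mem_limClosure {S : Set (ModuleCat.{u} R)}
    (hS : ∀ ⦃M N : ModuleCat.{u} R⦄, (M ≅ N) → M ∈ S → N ∈ S) {T X : ModuleCat.{u} R}
    (hT : T ∈ limClosure R S) (f : T ⟶ X)
    (hker : ∀ ⦃M : ModuleCat.{u} R⦄, M ∈ S → ∀ g : M ⟶ X, kernel g ∈ S) :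
    kernel f ∈ limClosure R S := by
  obtain ⟨⟨J, D, mem, c, hc, rfl⟩⟩ := hT
  exact limClosure_of_iso (ModuleCat.kernelIsoKer f).symm
    ⟨⟨J, ModuleCat.kerDiagram c f, fun j => hS (ModuleCat.kernelIsoKer _) (hker (mem j) _),
      ModuleCat.kerCocone c f, ModuleCat.isColimitKerCocone c f hc, rfl⟩⟩

end

theorem Alpha_inter_fp_eq_Alpha_small
    [IsNoetherianRing R] (𝒯 : Set (ModuleCat.{u} R))
    (hT : 𝒯 = limClosure R (𝒯 ∩ fpModules R)) :
    Alpha 𝒯 ∩ fpModules R =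
      {X | X ∈ fpModules R ∧ ∀ ⦃T : ModuleCat.{u} R⦄, T ∈ 𝒯 ∩ fpModules R →
        ∀ f : T ⟶ X, kernel f ∈ 𝒯 ∩ fpModules R} := by
  have h𝒯 : ∀ ⦃M N : ModuleCat.{u} R⦄, (M ≅ N) → M ∈ 𝒯 → N ∈ 𝒯 := fun M N e hM => by
    rw [hT] at hM ⊢
    exact limClosure_of_iso e hM
  have h𝒯fp : ∀ ⦃M N : ModuleCat.{u} R⦄, (M ≅ N) → M ∈ 𝒯 ∩ fpModules R → N ∈ 𝒯 ∩ fpModules R :=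
    fun M N e hM => ⟨h𝒯 e hM.1, fpModules_of_iso e hM.2⟩
  ext X
  constructor
  · rintro ⟨hX, hXfp⟩
    exact ⟨hXfp, fun T hT f => ⟨hX hT.1 f, kernel_mem_fpModules hT.2 f⟩⟩
  · rintro ⟨hXfp, hsmall⟩
    refine ⟨fun T hT𝒯 f => ?_, hXfp⟩
    rw [hT] at hT𝒯 ⊢
    exact kernel_mem_limClosure h𝒯fp hT𝒯 f hsmall
end

section
/- Let Λ be the Kronecker algebra over an algebraically closed field k, i.e. the path algebra of the quiver with two vertices and two parallel arrows. For a finite subset I ⊂ k of cardinality n, the Kronecker representation P(I) given by (V(I) ⇉ V(I) + k·1) inside the generic representation (k(T) ⇉ k(T)) (with maps inclusion and multiplication by T), where V(I) is the span of {1/(T−λ) | λ ∈ I}, is an indecomposable preprojective module of dimension vector (n, n+1). -/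
universe u

variable (k : Type u) [Field k]

/-- A representation of the Kronecker quiver `0 ⇉ 1`: two vector spaces and two
linear maps. -/
structure KronRep where
  V : Type u
  W : Type u
  [addV : AddCommGroup V]
  [addW : AddCommGroup W]
  [modV : Module k V]
  [modW : Module k W]
  a : V →ₗ[k] W
  b : V →ₗ[k] W

attribute [instance] KronRep.addV KronRep.addW KronRep.modV KronRep.modW

variable {k}

/-- A morphism of Kronecker representations. -/
@[ext]
structure KronHom (M N : KronRep k) where
  φ : M.V →ₗ[k] N.V
  ψ : M.W →ₗ[k] N.W
  comm_a : N.a.comp φ = ψ.comp M.a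
  comm_b : N.b.comp φ = ψ.comp M.b

/-- The zero morphism. -/
def KronHom.zero (M N : KronRep k) : KronHom M N :=
  ⟨0, 0, by simp, by simp⟩

/-- The identity morphism. -/
def KronHom.id (M : KronRep k) : KronHom M M :=
  ⟨LinearMap.id, LinearMap.id, by simp, by simp⟩

/-- `M` is the zero representation. -/
def KronRep.IsZeroRep (M : KronRep k) : Prop :=
  Subsingleton M.V ∧ Subsingleton M.W

/-- `M` is indecomposable: it is nonzero and its endomorphism ring has no nontrivial
idempotents. -/
def KronRep.Indecomposable (M : KronRep k) : Prop :=
  ¬ M.IsZeroRep ∧ ∀ e : KronHom M M,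
    e.φ.comp e.φ = e.φ → e.ψ.comp e.ψ = e.ψ → e = KronHom.zero M M ∨ e = KronHom.id M

/-- For Kronecker representations, the finite-dimensional indecomposable preprojective
modules are exactly the indecomposables of dimension vector `(n, n+1)`. -/
def KronRep.IsPreprojective (M : KronRep k) : Prop :=
  M.Indecomposable ∧ ∃ n : ℕ, Module.finrank k M.V = n ∧ Module.finrank k M.W = n + 1

variable (k)

/-- The subspace `V(I) ⊆ k(T)` spanned by the elements `1/(T - λ)`, `λ ∈ I`. -/
noncomputable def VI (I : Set k) : Submodule k (RatFunc k) :=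
  Submodule.span k ((fun l : k => (RatFunc.X - RatFunc.C l)⁻¹) '' I)

/-- The subspace `V(I) + k·1 ⊆ k(T)`. -/
noncomputable def WI (I : Set k) : Submodule k (RatFunc k) :=
  VI k I ⊔ Submodule.span k {1}

theorem mulX_mem (I : Set k) : ∀ v : RatFunc k, v ∈ VI k I →
    RatFunc.X * v ∈ WI k I := by
  intro v hv
  induction hv using Submodule.span_induction with
  | mem x hx =>
      obtain ⟨l, hl, rfl⟩ := hx
      have hne : (RatFunc.X - RatFunc.C l : RatFunc k) ≠ 0 := by
        have h1 : (RatFunc.X - RatFunc.C l : RatFunc k)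
            = algebraMap (Polynomial k) (RatFunc k) (Polynomial.X - Polynomial.C l) := by
          simp [RatFunc.algebraMap_X, RatFunc.algebraMap_C]
        rw [h1]
        exact RatFunc.algebraMap_ne_zero (Polynomial.X_sub_C_ne_zero l)
      have key : RatFunc.X * (RatFunc.X - RatFunc.C l)⁻¹
          = l • (RatFunc.X - RatFunc.C l)⁻¹ + 1 := by
        rw [Algebra.smul_def]
        field_simp
        rw [RatFunc.algebraMap_eq_C]
        ring
      rw [key]
      refine add_mem ?_ ?_
      · exact Submodule.mem_sup_left (Submodule.smul_mem _ _
          (Submodule.subset_span ⟨l, hl, rfl⟩))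
      · exact Submodule.mem_sup_right (Submodule.subset_span rfl)
  | zero => simpa using (WI k I).zero_mem
  | add x y hx hy ihx ihy => simpa [mul_add] using add_mem ihx ihy
  | smul c x hx ih => simpa [Algebra.mul_smul_comm] using (WI k I).smul_mem c ih

/-- Ringel's representation `P(I)`: the subrepresentation `(V(I) ⇉ V(I) + k·1)` of the
generic representation `(k(T) ⇉ k(T))`, whose maps are the inclusion and
multiplication by `T`. -/
noncomputable def Prep (I : Set k) : KronRep k where
  V := VI k I
  W := WI k I
  a := Submodule.inclusion le_sup_left
  b := LinearMap.codRestrict (WI k I)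
    ((LinearMap.mulLeft k (RatFunc.X : RatFunc k)).comp (VI k I).subtype)
    (fun v => mulX_mem k I v v.2)

/-!
The elements `f_λ = 1/(T - λ)` are eigenvectors, with the pairwise distinct eigenvalues `λ`, of
multiplication by `T` on `k(T)/k[T]`, because `T f_λ = λ f_λ + 1`. Hence the `f_λ` together with
`1 ∈ k[T]` are linearly independent, which gives the dimension vector `(n, n + 1)`.

If `(φ, ψ)` is an endomorphism of `P(I)` and `g = ψ(1)`, then applying `ψ` to `T f_λ = λ f_λ + 1`
gives `(T - λ) φ(f_λ) = g`, so `φ` and `ψ` are multiplication by `g`. If `(φ, ψ)` is idempotent,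
then `g² = g` in the field `k(T)`, so `g` is `0` or `1`.
-/

namespace RatFunc

open scoped Polynomial

variable {K : Type*} [Field K]

noncomputable def invXSubC (a : K) : RatFunc K := (X - C a)⁻¹

theorem X_sub_C_ne_zero (a : K) : (X - C a : RatFunc K) ≠ 0 := by
  simpa [← algebraMap_X, ← algebraMap_C, ← map_sub] using
    algebraMap_ne_zero (Polynomial.X_sub_C_ne_zero a)

theorem X_mul_invXSubC (a : K) : X * invXSubC a = a • invXSubC a + 1 := by
  have := X_sub_C_ne_zero a
  rw [invXSubC, smul_eq_C_mul]
  field_simp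
  ring

variable (K) in
noncomputable def polynomialSubmodule : Submodule K (RatFunc K) :=
  Subalgebra.toSubmodule (IsScalarTower.toAlgHom K K[X] (RatFunc K)).range

theorem invXSubC_notMem_polynomialSubmodule (a : K) : invXSubC a ∉ polynomialSubmodule K := by
  rintro ⟨p, hp : algebraMap K[X] (RatFunc K) p = invXSubC a⟩
  apply Polynomial.not_isUnit_X_sub_C a
  refine IsUnit.of_mul_eq_one p (algebraMap_injective K ?_)
  rw [map_mul, hp, map_one, map_sub, algebraMap_X, algebraMap_C, invXSubC,
    mul_inv_cancel₀ (X_sub_C_ne_zero a)]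

variable (K) in
noncomputable def mulXModPolynomials : Module.End K (RatFunc K ⧸ polynomialSubmodule K) :=
  (polynomialSubmodule K).mapQ _ (LinearMap.mulLeft K X) fun _ ⟨p, hp⟩ =>
    ⟨Polynomial.X * p, by simp_all [algebraMap_X]⟩

theorem hasEigenvector_mulXModPolynomials (a : K) :
    (mulXModPolynomials K).HasEigenvector a ((polynomialSubmodule K).mkQ (invXSubC a)) := by
  refine Module.End.hasEigenvector_iff.mpr ⟨Module.End.mem_eigenspace_iff.mpr ?_, ?_⟩
  · rw [mulXModPolynomials, Submodule.mkQ_apply, Submodule.mapQ_apply, LinearMap.mulLeft_apply,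
      X_mul_invXSubC, Submodule.Quotient.mk_add, Submodule.Quotient.mk_smul,
      (Submodule.Quotient.mk_eq_zero _ (x := 1)).mpr (Subalgebra.one_mem _), add_zero]
  · simpa using invXSubC_notMem_polynomialSubmodule a

theorem linearIndependent_mkQ_invXSubC :
    LinearIndependent K fun a : K => (polynomialSubmodule K).mkQ (invXSubC a) :=
  (mulXModPolynomials K).eigenvectors_linearIndependent' id Function.injective_id _
    hasEigenvector_mulXModPolynomials

theorem linearIndependent_invXSubC : LinearIndependent K (invXSubC (K := K)) :=
  .of_comp _ linearIndependent_mkQ_invXSubC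

theorem linearIndependent_invXSubC_option :
    LinearIndependent K fun o : Option K => o.casesOn' 1 invXSubC := by
  refine linearIndependent_invXSubC.option fun h1 => one_ne_zero <|
    (Submodule.range_ker_disjoint linearIndependent_mkQ_invXSubC).le_bot ⟨h1, ?_⟩
  rw [Submodule.ker_mkQ]
  exact Subalgebra.one_mem _

end RatFunc

theorem LinearIndepOn.finrank_span_image {R M ι : Type*} [Ring R] [StrongRankCondition R]
    [AddCommGroup M] [Module R M] {v : ι → M} {s : Set ι} (hs : LinearIndepOn R v s) :
    Module.finrank R (Submodule.span R (v '' s)) = s.ncard := by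
  rw [Module.finrank, ← Cardinal.toNat_toENat, toENat_rank_span_set hs, Set.ncard_def]

open RatFunc

theorem finrank_VI (I : Set k) : Module.finrank k (VI k I) = I.ncard :=
  (linearIndependent_invXSubC.linearIndepOn I).finrank_span_image

theorem WI_eq_span_image (I : Set k) :
    WI k I = Submodule.span k
      ((fun o : Option k => o.casesOn' 1 invXSubC) '' insert none (some '' I)) := by
  rw [Set.image_insert_eq, Set.image_image, Submodule.span_insert, sup_comm]
  rfl

theorem finrank_WI {I : Set k} (hI : I.Finite) : Module.finrank k (WI k I) = I.ncard + 1 := by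
  rw [WI_eq_span_image, (linearIndependent_invXSubC_option.linearIndepOn _).finrank_span_image,
    Set.ncard_insert_of_notMem (by simp) (hI.image _),
    Set.ncard_image_of_injective _ (Option.some_injective _)]

noncomputable def oneWI (I : Set k) : WI k I :=
  ⟨1, Submodule.mem_sup_right (Submodule.mem_span_singleton_self 1)⟩

namespace Prep

variable {k} {I : Set k} {φ : VI k I →ₗ[k] VI k I} {ψ : WI k I →ₗ[k] WI k I}

theorem coe_φ_apply_eq_mul
    (ha : ∀ v : VI k I, (ψ ⟨v, Submodule.mem_sup_left v.2⟩ : RatFunc k) = φ v)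
    (hb : ∀ v : VI k I,
      (ψ ⟨X * (v : RatFunc k), mulX_mem k I v v.2⟩ : RatFunc k) = X * (φ v : RatFunc k))
    (v : VI k I) : (φ v : RatFunc k) = ψ (oneWI k I) * v := by
  obtain ⟨v, hv⟩ := v
  induction hv using Submodule.span_induction with
  | mem _ h =>
    obtain ⟨l, hl, rfl⟩ := h
    set f : VI k I := ⟨invXSubC l, Submodule.subset_span ⟨l, hl, rfl⟩⟩
    have hXf : (⟨X * (f : RatFunc k), mulX_mem k I f f.2⟩ : WI k I) =
        l • ⟨f, Submodule.mem_sup_left f.2⟩ + oneWI k I :=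
      Subtype.ext (X_mul_invXSubC l)
    have h := hb f
    rw [hXf, map_add, map_smul, Submodule.coe_add, Submodule.coe_smul, ha, smul_eq_C_mul] at h
    change (φ f : RatFunc k) = _ * (X - C l)⁻¹
    rw [eq_mul_inv_iff_mul_eq₀ (X_sub_C_ne_zero l)]
    linear_combination h.symm
  | zero =>
    change (φ 0 : RatFunc k) = _
    simp
  | add x y hx hy ihx ihy =>
    change (φ (⟨x, hx⟩ + ⟨y, hy⟩) : RatFunc k) = _
    rw [map_add, Submodule.coe_add, ihx, ihy, mul_add]
  | smul c x hx ih =>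
    change (φ (c • ⟨x, hx⟩) : RatFunc k) = _
    rw [map_smul, Submodule.coe_smul, ih, mul_smul_comm]

theorem coe_ψ_apply_eq_mul
    (ha : ∀ v : VI k I, (ψ ⟨v, Submodule.mem_sup_left v.2⟩ : RatFunc k) = φ v)
    (hb : ∀ v : VI k I,
      (ψ ⟨X * (v : RatFunc k), mulX_mem k I v v.2⟩ : RatFunc k) = X * (φ v : RatFunc k))
    (w : WI k I) : (ψ w : RatFunc k) = ψ (oneWI k I) * w := by
  obtain ⟨_, hw⟩ := w
  obtain ⟨v, hv, u, hu, rfl⟩ := Submodule.mem_sup.mp hw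
  obtain ⟨c, rfl⟩ := Submodule.mem_span_singleton.mp hu
  have hw : (⟨v + c • 1, Submodule.mem_sup.mpr ⟨v, hv, _, hu, rfl⟩⟩ : WI k I) =
      ⟨v, Submodule.mem_sup_left hv⟩ + c • oneWI k I := rfl
  rw [hw, map_add, map_smul, Submodule.coe_add, Submodule.coe_smul, ha ⟨v, hv⟩,
    coe_φ_apply_eq_mul ha hb]
  simp only [oneWI, Submodule.coe_add, Submodule.coe_smul, mul_add, mul_smul_comm, mul_one]

theorem eq_zero_or_eq_id_of_idempotent
    (ha : ∀ v : VI k I, (ψ ⟨v, Submodule.mem_sup_left v.2⟩ : RatFunc k) = φ v)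
    (hb : ∀ v : VI k I,
      (ψ ⟨X * (v : RatFunc k), mulX_mem k I v v.2⟩ : RatFunc k) = X * (φ v : RatFunc k))
    (hψ2 : ψ ∘ₗ ψ = ψ) : φ = 0 ∧ ψ = 0 ∨ φ = LinearMap.id ∧ ψ = LinearMap.id := by
  have hφ := coe_φ_apply_eq_mul ha hb
  have hψ := coe_ψ_apply_eq_mul ha hb
  generalize (ψ (oneWI k I) : RatFunc k) = g at hφ hψ
  have hg : g * g = g := by
    simpa [hψ, oneWI] using congrArg Subtype.val (LinearMap.congr_fun hψ2 (oneWI k I))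
  rcases IsIdempotentElem.iff_eq_zero_or_one.mp hg with rfl | rfl
  · left
    constructor <;> ext x <;> simp [hφ, hψ]
  · right
    constructor <;> ext x <;> simp [hφ, hψ]

variable (k I) in
theorem indecomposable : (Prep k I).Indecomposable := by
  refine ⟨fun h => one_ne_zero (congrArg Subtype.val (h.2.elim (oneWI k I) 0)),
    fun e _ hψ2 => ?_⟩
  rcases eq_zero_or_eq_id_of_idempotent (φ := e.φ) (ψ := e.ψ)
    (fun v => congrArg Subtype.val (LinearMap.congr_fun e.comm_a v).symm)
    (fun v => congrArg Subtype.val (LinearMap.congr_fun e.comm_b v).symm) hψ2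
    with ⟨hφ, hψ⟩ | ⟨hφ, hψ⟩
  · exact Or.inl (KronHom.ext hφ hψ)
  · exact Or.inr (KronHom.ext hφ hψ)

end Prep

theorem Prep_indecomposable_preprojective_of_finite
    (I : Set k) (n : ℕ) (hfin : I.Finite) (hcard : I.ncard = n) :
    (Prep k I).Indecomposable ∧ (Prep k I).IsPreprojective ∧
      Module.finrank k (Prep k I).V = n ∧ Module.finrank k (Prep k I).W = n + 1 := by
  subst hcard
  have hV : Module.finrank k (Prep k I).V = I.ncard := finrank_VI k I
  have hW : Module.finrank k (Prep k I).W = I.ncard + 1 := finrank_WI k hfin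
  exact ⟨Prep.indecomposable k I, ⟨Prep.indecomposable k I, _, hV, hW⟩, hV, hW⟩
end
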